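/- Let μ be a critical non-trivial offspring distribution (μ(0) > 0 and ∑_k kμ(k) = 1) and τ a Galton–Watson tree with offspring law μ. For all integers n, m ≥ 2, P(#τ ≤ n and sup_i |H_i(τ) - H_{i+1}(τ)| ≥ m) ≤ n·(1 - μ(0))^m, where H_i(τ) = |u_i(τ)| is the height of the i-th vertex of τ in depth-first (lexicographic) order, with H_i(τ) = 0 for i ≥ #τ. -/

import Mathlib

open MeasureTheory

/-- Finite rooted plane trees. -/
inductive PTree : Type where
  | node : List PTree → PTree

namespace PTree

/-- Number of vertices. -/
def size : PTree → ℕ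
  | node ts => 1 + (ts.attach.map (fun s => size s.1)).sum
decreasing_by simp_wf; have := List.sizeOf_lt_of_mem s.2; first | omega | (simp only [List.cons.sizeOf_spec] at this ⊢; omega) | (simp_all; omega)

/-- The list of the heights of the vertices, in depth-first (lexicographic) order. -/
def heightList : PTree → List ℕ
  | node ts => 0 :: (ts.attach.map (fun s => (heightList s.1).map (· + 1))).flatten
decreasing_by simp_wf; have := List.sizeOf_lt_of_mem s.2; first | omega | (simp only [List.cons.sizeOf_spec] at this ⊢; omega) | (simp_all; omega)

/-- `H_i(t)`: the height of the `i`-th vertex in depth-first order, and `0` for `i ≥ #t`. -/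
def H (t : PTree) (i : ℕ) : ℕ := (heightList t).getD i 0

end PTree

/-- `PTree` is a countable type; we equip it with the discrete σ-algebra. -/
instance : MeasurableSpace PTree := ⊤

/-!
A jump of size `m ≥ 2` in `H` must be a descent, since `H (i + 1) ≤ H i + 1`. A descent of size
`m` after `u_i` means that `u_i` is the last vertex of the subtree of some vertex `v` whose
rightmost branch then has length at least `m`, and `|v| < #τ ≤ n`. For a critical Galton–Watson
tree the expected number of vertices at height `h` whose subtree lies in a set `A` is `P(τ ∈ A)`
(many-to-one formula), and the rightmost branch has length at least `m` with probability
`(1 - μ 0)^m`, since each vertex on it has a child with probability `1 - μ 0`, independently.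
A union bound over the heights `h < n` concludes.
-/
open MeasureTheory
open scoped ENNReal

namespace PTree

@[induction_eliminator]
theorem ind {motive : PTree → Prop}
    (node : ∀ ts, (∀ t ∈ ts, motive t) → motive (node ts)) : ∀ t, motive t
  | .node ts => node ts fun t _ => ind node t

theorem size_node (ts : List PTree) : size (node ts) = 1 + (ts.map size).sum := by
  rw [size, List.attach_map_val (l := ts) (f := size)]

theorem size_lt_size_node {ts : List PTree} {t : PTree} (ht : t ∈ ts) :
    size t < size (node ts) := by
  have := List.le_sum_of_mem (List.mem_map_of_mem (f := size) ht)
  rw [size_node]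
  omega

def childHeights (ts : List PTree) : List ℕ :=
  (ts.map fun s => (heightList s).map (· + 1)).flatten

theorem heightList_node (ts : List PTree) : heightList (node ts) = 0 :: childHeights ts := by
  rw [heightList, List.attach_map_val (l := ts) (f := fun s => (heightList s).map (· + 1))]
  rfl

theorem childHeights_cons (s : PTree) (ts : List PTree) :
    childHeights (s :: ts) = (heightList s).map (· + 1) ++ childHeights ts := rfl

theorem length_heightList (t : PTree) : (heightList t).length = size t := by
  induction t with
  | node ts ih =>
    rw [heightList_node, size_node, List.length_cons, add_comm]
    congr 1
    induction ts with
    | nil => rfl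
    | cons s ts ihts =>
      simp only [childHeights_cons, List.length_append, List.length_map, ih s (by simp),
        ihts fun t ht => ih t (by simp [ht]), List.map_cons, List.sum_cons]

theorem size_pos (t : PTree) : 0 < size t := by
  cases t with
  | node ts => rw [size_node]; omega

theorem H_zero (t : PTree) : H t 0 = 0 := by
  cases t with
  | node ts => rw [H, heightList_node]; rfl

theorem H_node_succ (ts : List PTree) (j : ℕ) :
    H (node ts) (j + 1) = (childHeights ts).getD j 0 := by
  rw [H, heightList_node]; rfl

theorem H_eq_zero_of_size_le {t : PTree} {i : ℕ} (hi : size t ≤ i) : H t i = 0 :=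
  List.getD_eq_default _ _ (by rwa [length_heightList])

theorem getD_map_heightList {s : PTree} {j : ℕ} (hj : j < size s) :
    ((heightList s).map (· + 1)).getD j 0 = H s j + 1 := by
  rw [← length_heightList] at hj
  rw [List.getD_eq_getElem _ _ (by simpa using hj), List.getElem_map, H,
    List.getD_eq_getElem _ _ hj]

theorem getD_childHeights_cons (s : PTree) (ts : List PTree) (j : ℕ) :
    (childHeights (s :: ts)).getD j 0
      = if j < size s then H s j + 1 else (childHeights ts).getD (j - size s) 0 := by
  rw [childHeights_cons]
  split_ifs with hj
  · rw [List.getD_append _ _ _ _ (by simpa [length_heightList] using hj), getD_map_heightList hj]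
  · rw [List.getD_append_right _ _ _ _ (by simp [length_heightList]; omega)]
    simp [length_heightList]

theorem length_childHeights_cons (s : PTree) (ts : List PTree) :
    (childHeights (s :: ts)).length = size s + (childHeights ts).length := by
  simp [childHeights_cons, length_heightList]

theorem one_le_getD_childHeights {ts : List PTree} {j : ℕ} (hj : j < (childHeights ts).length) :
    1 ≤ (childHeights ts).getD j 0 := by
  rw [List.getD_eq_getElem _ _ hj]
  obtain ⟨l, hl, hx⟩ := List.mem_flatten.mp (List.getElem_mem hj)
  obtain ⟨s, -, rfl⟩ := List.mem_map.mp hl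
  obtain ⟨x, -, hx⟩ := List.mem_map.mp hx
  omega

theorem getD_childHeights_zero_le_one (ts : List PTree) : (childHeights ts).getD 0 0 ≤ 1 := by
  cases ts with
  | nil => simp [childHeights]
  | cons s ts => rw [getD_childHeights_cons, if_pos (size_pos s), H_zero]

theorem getD_childHeights_succ_le {ts : List PTree}
    (ih : ∀ s ∈ ts, ∀ i, H s (i + 1) ≤ H s i + 1) (j : ℕ) :
    (childHeights ts).getD (j + 1) 0 ≤ (childHeights ts).getD j 0 + 1 := by
  induction ts generalizing j with
  | nil => simp [childHeights]
  | cons s ts ihts =>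
    simp only [getD_childHeights_cons]
    by_cases hj1 : j + 1 < size s
    · rw [if_pos hj1, if_pos (by omega)]
      exact Nat.add_le_add_right (ih s (by simp) j) 1
    · by_cases hj : j < size s
      · have := getD_childHeights_zero_le_one ts
        rw [if_neg hj1, if_pos hj, show j + 1 - size s = 0 by omega]
        omega
      · rw [if_neg hj1, if_neg hj, show j + 1 - size s = j - size s + 1 by omega]
        exact ihts (fun s hs => ih s (by simp [hs])) _

theorem H_succ_le (t : PTree) (i : ℕ) : H t (i + 1) ≤ H t i + 1 := by
  induction t generalizing i with
  | node ts ih =>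
    cases i with
    | zero =>
      rw [H_node_succ, H_zero]
      exact (getD_childHeights_zero_le_one ts).trans le_add_self
    | succ j =>
      rw [H_node_succ, H_node_succ]
      exact getD_childHeights_succ_le ih j

/-- The length of the rightmost branch, whose leaf is the last vertex in depth-first order. -/
def lastHeight (t : PTree) : ℕ := H t (size t - 1)

theorem size_node_eq_length_childHeights (ts : List PTree) :
    size (node ts) = (childHeights ts).length + 1 := by
  rw [← length_heightList, heightList_node, List.length_cons]

theorem lastHeight_node_nil : lastHeight (node []) = 0 := by
  simp [lastHeight, size_node, H_zero]

theorem childHeights_append (ts ss : List PTree) :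
    childHeights (ts ++ ss) = childHeights ts ++ childHeights ss := by
  simp [childHeights]

theorem lastHeight_node_append (ts : List PTree) (s : PTree) :
    lastHeight (node (ts ++ [s])) = lastHeight s + 1 := by
  have hs := size_pos s
  have hsingle : childHeights [s] = (heightList s).map (· + 1) := by simp [childHeights]
  rw [lastHeight, size_node_eq_length_childHeights, childHeights_append, hsingle,
    List.length_append, List.length_map, length_heightList,
    show (childHeights ts).length + size s + 1 - 1 = (childHeights ts).length + (size s - 1) + 1
      by omega,
    H_node_succ, childHeights_append, hsingle, List.getD_append_right _ _ _ _ (by omega),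
    Nat.add_sub_cancel_left, getD_map_heightList (by omega), lastHeight]

theorem lastHeight_node_ofFn {k : ℕ} (ts : Fin (k + 1) → PTree) :
    lastHeight (node (List.ofFn ts)) = lastHeight (ts (Fin.last k)) + 1 := by
  rw [List.ofFn_succ', List.concat_eq_append, lastHeight_node_append]

/-- The fringe subtrees `θ_v t` of the vertices `v` with `|v| = h`, from left to right. -/
def subtreesAt : ℕ → PTree → List PTree
  | 0, t => [t]
  | h + 1, node ts => ts.flatMap (subtreesAt h)

theorem lt_size_of_mem_subtreesAt {h : ℕ} {t u : PTree} (hu : u ∈ subtreesAt h t) :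
    h < size t := by
  induction h generalizing t with
  | zero => exact size_pos t
  | succ h ih =>
    cases t with
    | node ts =>
      obtain ⟨s, hs, hu⟩ := List.mem_flatMap.mp hu
      exact (Nat.succ_le_of_lt (ih hu)).trans_lt (size_lt_size_node hs)

theorem exists_mem_subtreesAt_of_childHeights_descent {m : ℕ} {ts : List PTree}
    (ih : ∀ s ∈ ts, ∀ i, H s (i + 1) + m ≤ H s i →
      ∃ h, ∃ u ∈ subtreesAt h s, m ≤ lastHeight u)
    {j : ℕ} (hj : j + 1 < (childHeights ts).length)
    (hdesc : (childHeights ts).getD (j + 1) 0 + m ≤ (childHeights ts).getD j 0) :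
    ∃ s ∈ ts, ∃ h, ∃ u ∈ subtreesAt h s, m ≤ lastHeight u := by
  induction ts generalizing j with
  | nil => simp [childHeights] at hj
  | cons s ts ihts =>
    rw [length_childHeights_cons] at hj
    simp only [getD_childHeights_cons] at hdesc
    by_cases hjs : j < size s
    · suffices H s (j + 1) + m ≤ H s j from ⟨s, by simp, ih s (by simp) j this⟩
      rw [if_pos hjs] at hdesc
      split_ifs at hdesc with hj1
      · omega
      · have := one_le_getD_childHeights (ts := ts) (j := j + 1 - size s) (by omega)
        rw [H_eq_zero_of_size_le (by omega)]
        omega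
    · rw [if_neg hjs, if_neg (by omega), show j + 1 - size s = j - size s + 1 by omega] at hdesc
      obtain ⟨s', hs', hu⟩ := ihts (fun s hs => ih s (by simp [hs])) (by omega) hdesc
      exact ⟨s', by simp [hs'], hu⟩

theorem exists_mem_subtreesAt_of_descent {m : ℕ} (hm : 0 < m) (t : PTree) (i : ℕ)
    (hdesc : H t (i + 1) + m ≤ H t i) : ∃ h, ∃ u ∈ subtreesAt h t, m ≤ lastHeight u := by
  induction t generalizing i with
  | node ts ih =>
    cases i with
    | zero => rw [H_zero] at hdesc; omega
    | succ j =>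
      rw [H_node_succ, H_node_succ] at hdesc
      by_cases hj : j + 1 < (childHeights ts).length
      · obtain ⟨s, hs, h, u, hu, hmu⟩ :=
          exists_mem_subtreesAt_of_childHeights_descent ih hj hdesc
        exact ⟨h + 1, u, List.mem_flatMap.mpr ⟨s, hs, hu⟩, hmu⟩
      · rw [List.getD_eq_default _ _ (by omega)] at hdesc
        have hjlt : j < (childHeights ts).length := by
          by_contra hc
          rw [List.getD_eq_default _ _ (by omega)] at hdesc
          omega
        refine ⟨0, node ts, List.mem_singleton_self _, ?_⟩
        rw [lastHeight, size_node_eq_length_childHeights,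
          show (childHeights ts).length + 1 - 1 = j + 1 by omega, H_node_succ]
        omega

theorem exists_mem_subtreesAt_of_jump {m : ℕ} (hm : 2 ≤ m) {t : PTree} {i : ℕ}
    (hjump : (m : ℤ) ≤ |(H t i : ℤ) - H t (i + 1)|) :
    ∃ h < size t, ∃ u ∈ subtreesAt h t, m ≤ lastHeight u := by
  have hstep := H_succ_le t i
  have hdesc : H t (i + 1) + m ≤ H t i := by
    rcases le_abs.mp hjump with h | h <;> omega
  obtain ⟨h, u, hu, hmu⟩ := exists_mem_subtreesAt_of_descent (by omega) t i hdesc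
  exact ⟨h, lt_size_of_mem_subtreesAt hu, u, hu, hmu⟩

end PTree

def IsGaltonWatson (μ : ℕ → ℝ) (P : Measure PTree) : Prop :=
  ∀ f : PTree → ℝ≥0∞, ∫⁻ t, f t ∂P
    = ∑' k : ℕ, ENNReal.ofReal (μ k)
        * ∫⁻ ts : Fin k → PTree, f (.node (List.ofFn ts)) ∂(Measure.pi fun _ => P)

section GaltonWatson

open PTree

variable {μ : ℕ → ℝ} {P : Measure PTree}

theorem tsum_ofReal_succ (hμ : ∀ k, 0 ≤ μ k) (hμsum : HasSum μ 1) :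
    ∑' k, ENNReal.ofReal (μ (k + 1)) = ENNReal.ofReal (1 - μ 0) := by
  have htail : HasSum (fun k => μ (k + 1)) (1 - μ 0) := by
    simpa using (hasSum_nat_add_iff' 1).mpr hμsum
  rw [← ENNReal.ofReal_tsum_of_nonneg (fun k => hμ _) htail.summable, htail.tsum_eq]

theorem tsum_ofReal_mul_natCast (hμ : ∀ k, 0 ≤ μ k)
    (hcrit : HasSum (fun k : ℕ => (k : ℝ) * μ k) 1) :
    ∑' k : ℕ, ENNReal.ofReal (μ k) * k = 1 := by
  have hterm (k : ℕ) : ENNReal.ofReal (μ k) * k = ENNReal.ofReal (k * μ k) := by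
    rw [ENNReal.ofReal_mul (Nat.cast_nonneg k), ENNReal.ofReal_natCast, mul_comm]
  rw [tsum_congr hterm, ← ENNReal.ofReal_tsum_of_nonneg (fun k => by have := hμ k; positivity)
    hcrit.summable, hcrit.tsum_eq, ENNReal.ofReal_one]

variable [IsProbabilityMeasure P]

theorem lintegral_comp_eval {k : ℕ} (c : Fin k) (f : PTree → ℝ≥0∞) :
    ∫⁻ ts : Fin k → PTree, f (ts c) ∂(Measure.pi fun _ => P) = ∫⁻ t, f t ∂P :=
  (measurePreserving_eval (fun _ => P) c).lintegral_comp measurable_from_top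

theorem measure_setOf_le_lastHeight (hμ : ∀ k, 0 ≤ μ k) (hμsum : HasSum μ 1)
    (hgw : IsGaltonWatson μ P) (j : ℕ) :
    P {t | j ≤ lastHeight t} = ENNReal.ofReal (1 - μ 0) ^ j := by
  induction j with
  | zero => simp
  | succ j ih =>
    have hnode (k : ℕ) (ts : Fin (k + 1) → PTree) :
        {t | j + 1 ≤ lastHeight t}.indicator (1 : PTree → ℝ≥0∞) (node (List.ofFn ts))
          = {t | j ≤ lastHeight t}.indicator 1 (ts (Fin.last k)) := by
      simp only [Set.indicator_apply, Set.mem_ofPred_eq, lastHeight_node_ofFn,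
        Nat.add_le_add_iff_right, Pi.one_apply]
    rw [← lintegral_indicator_one MeasurableSpace.measurableSet_top, hgw,
      tsum_eq_zero_add' ENNReal.summable]
    simp only [hnode, lintegral_comp_eval,
      lintegral_indicator_one MeasurableSpace.measurableSet_top, ih, ENNReal.tsum_mul_right,
      tsum_ofReal_succ hμ hμsum]
    simp [lastHeight_node_nil, pow_succ']

theorem lintegral_sum_subtreesAt (hμ : ∀ k, 0 ≤ μ k)
    (hcrit : HasSum (fun k : ℕ => (k : ℝ) * μ k) 1) (hgw : IsGaltonWatson μ P)
    (f : PTree → ℝ≥0∞) (h : ℕ) :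
    ∫⁻ t, ((subtreesAt h t).map f).sum ∂P = ∫⁻ t, f t ∂P := by
  induction h with
  | zero => simp [subtreesAt]
  | succ h ih =>
    have hnode (k : ℕ) (ts : Fin k → PTree) :
        ((subtreesAt (h + 1) (node (List.ofFn ts))).map f).sum
          = ∑ c, ((subtreesAt h (ts c)).map f).sum := by
      simp only [subtreesAt, List.flatMap_def, List.map_flatten, List.sum_flatten,
        List.map_ofFn, List.sum_ofFn]
      rfl
    have hchildren (k : ℕ) : ∫⁻ ts : Fin k → PTree, ∑ c, ((subtreesAt h (ts c)).map f).sum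
        ∂(Measure.pi fun _ => P) = k * ∫⁻ t, f t ∂P := by
      rw [lintegral_finsetSum
        (f := fun c (ts : Fin k → PTree) => ((subtreesAt h (ts c)).map f).sum) _ fun c _ =>
          (measurable_from_top (f := fun t => ((subtreesAt h t).map f).sum)).comp
            (measurable_pi_apply c)]
      simp [lintegral_comp_eval (f := fun t => ((subtreesAt h t).map f).sum), ih]
    simp only [hgw (fun t => ((subtreesAt (h + 1) t).map f).sum), hnode, hchildren, ← mul_assoc,
      ENNReal.tsum_mul_right, tsum_ofReal_mul_natCast hμ hcrit, one_mul]

theorem measure_exists_mem_subtreesAt_le (hμ : ∀ k, 0 ≤ μ k)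
    (hcrit : HasSum (fun k : ℕ => (k : ℝ) * μ k) 1) (hgw : IsGaltonWatson μ P)
    (h : ℕ) (s : Set PTree) :
    P {t | ∃ u ∈ subtreesAt h t, u ∈ s} ≤ P s := by
  have hind (t : PTree) :
      {t | ∃ u ∈ subtreesAt h t, u ∈ s}.indicator (1 : PTree → ℝ≥0∞) t
        ≤ ((subtreesAt h t).map (s.indicator 1)).sum := by
    by_cases ht : t ∈ {t | ∃ u ∈ subtreesAt h t, u ∈ s}
    · rw [Set.indicator_of_mem ht]
      obtain ⟨u, hu, hus⟩ := ht
      calc (1 : PTree → ℝ≥0∞) t = s.indicator 1 u := (Set.indicator_of_mem hus 1).symm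
        _ ≤ _ := List.le_sum_of_mem (List.mem_map_of_mem hu)
    · rw [Set.indicator_of_notMem ht]
      exact bot_le
  calc P {t | ∃ u ∈ subtreesAt h t, u ∈ s}
      = ∫⁻ t, {t | ∃ u ∈ subtreesAt h t, u ∈ s}.indicator 1 t ∂P :=
        (lintegral_indicator_one MeasurableSpace.measurableSet_top).symm
    _ ≤ ∫⁻ t, ((subtreesAt h t).map (s.indicator 1)).sum ∂P := lintegral_mono hind
    _ = P s := by
      rw [lintegral_sum_subtreesAt hμ hcrit hgw,
        lintegral_indicator_one MeasurableSpace.measurableSet_top]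

end GaltonWatson

theorem stmt_10_general (μ : ℕ → ℝ) (hμ : ∀ k, 0 ≤ μ k) (hμsum : HasSum μ 1)
    (hcrit : HasSum (fun k : ℕ => (k : ℝ) * μ k) 1)
    (P : Measure PTree) [IsProbabilityMeasure P]
    (hbranch : ∀ f : PTree → ENNReal,
      ∫⁻ t, f t ∂P
        = ∑' k : ℕ, ENNReal.ofReal (μ k)
            * ∫⁻ ts : Fin k → PTree, f (.node (List.ofFn ts)) ∂(Measure.pi fun _ => P))
    (n m : ℕ) (hm : 2 ≤ m) :
    P {t : PTree | t.size ≤ n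
          ∧ ∃ i : ℕ, (m : ℤ) ≤ |(t.H i : ℤ) - (t.H (i+1) : ℤ)|}
      ≤ ENNReal.ofReal ((n : ℝ) * (1 - μ 0) ^ m) := by
  have hμ0 : μ 0 ≤ 1 := le_hasSum hμsum 0 fun k _ => hμ k
  calc _ ≤ P (⋃ h ∈ Finset.range n, {t | ∃ u ∈ PTree.subtreesAt h t, m ≤ u.lastHeight}) := by
        refine measure_mono fun t ⟨hsize, i, hjump⟩ => ?_
        obtain ⟨h, hh, u, hu, hmu⟩ := PTree.exists_mem_subtreesAt_of_jump hm hjump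
        exact Set.mem_biUnion (Finset.mem_range.mpr (by omega)) ⟨u, hu, hmu⟩
    _ ≤ ∑ h ∈ Finset.range n, P {t | ∃ u ∈ PTree.subtreesAt h t, m ≤ u.lastHeight} :=
        measure_biUnion_finset_le _ _
    _ ≤ ∑ h ∈ Finset.range n, P {u | m ≤ u.lastHeight} := Finset.sum_le_sum fun h _ =>
        measure_exists_mem_subtreesAt_le hμ hcrit hbranch h {u | m ≤ u.lastHeight}
    _ = ENNReal.ofReal ((n : ℝ) * (1 - μ 0) ^ m) := by
      rw [measure_setOf_le_lastHeight hμ hμsum hbranch, Finset.sum_const, Finset.card_range,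
        nsmul_eq_mul, ENNReal.ofReal_mul (Nat.cast_nonneg n), ENNReal.ofReal_natCast,
        ENNReal.ofReal_pow (by linarith)]

/-- Let `μ` be a critical non-trivial offspring distribution and `τ` a
Galton–Watson tree with offspring law `μ` (expressed by the branching identity `hbranch`).
For all integers `n, m ≥ 2`,
`P(#τ ≤ n and sup_i |H_i(τ) - H_{i+1}(τ)| ≥ m) ≤ n·(1 - μ(0))^m`. -/
theorem stmt_10 (μ : ℕ → ℝ) (hμ : ∀ k, 0 ≤ μ k) (hμsum : HasSum μ 1)
    (h₀ : 0 < μ 0) (hcrit : HasSum (fun k : ℕ => (k : ℝ) * μ k) 1)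
    (P : Measure PTree) [IsProbabilityMeasure P]
    (hbranch : ∀ f : PTree → ENNReal,
      ∫⁻ t, f t ∂P
        = ∑' k : ℕ, ENNReal.ofReal (μ k)
            * ∫⁻ ts : Fin k → PTree, f (.node (List.ofFn ts)) ∂(Measure.pi fun _ => P))
    (n m : ℕ) (hn : 2 ≤ n) (hm : 2 ≤ m) :
    P {t : PTree | t.size ≤ n
          ∧ ∃ i : ℕ, (m : ℤ) ≤ |(t.H i : ℤ) - (t.H (i+1) : ℤ)|}
      ≤ ENNReal.ofReal ((n : ℝ) * (1 - μ 0) ^ m) :=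
  stmt_10_general μ hμ hμsum hcrit P hbranch n m hm
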